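/- arXiv:2203.03243 — 2 statements merged into one kernel-verified Lean document; each statement's English description precedes it below -/
import Mathlib

section
/- Suppose X is finite and a choice process admits an AAT representation (u, Γ). Then there exists a single infinite sequence of choice sets (A_n) such that the within-sequence switch relation 𝕊_{(A_n)} restricted to X̂ is a strict total order. Concretely, the sequence that first presents, in increasing u-order, choice sets A_i with default choice x_i for each x_i ∈ X̂, and then presents all binary choice sets, works. -/
open Finset

variable {X : Type*}

/-- A history is valid if every choice set in it is nonempty. -/
def ValidHist (h : List (Finset X)) : Prop := ∀ A ∈ h, A.Nonempty

/-- The set of alternatives chosen at some point along history `h`,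
where the choice at stage `i` is made from `h.get i` given the prior history `h.take i`. -/
def chosenSet (ct : List (Finset X) → Finset X → X) (h : List (Finset X)) : Set X :=
  {x | ∃ i : Fin h.length, ct (h.take i.1) (h.get i) = x}

/-- Effective consideration set after history `h` facing choice set `A`. -/
def consider (ct : List (Finset X) → Finset X → X) (Γ : Finset X → Set X)
    (h : List (Finset X)) (A : Finset X) : Set X :=
  Γ A ∪ (chosenSet ct h ∩ ↑A)

/-- `(u, Γ)` is an AAT representation of the choice process `ct`:
`Γ A` is a nonempty subset of `A`, and the choice after any valid history `h` from any
nonempty `A` is the unique `u`-maximizer of `Γ A ∪ (chosenSet h ∩ A)`. -/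
def IsAAT (ct : List (Finset X) → Finset X → X) (u : X → ℝ) (Γ : Finset X → Set X) : Prop :=
  (∀ A : Finset X, A.Nonempty → (Γ A).Nonempty ∧ Γ A ⊆ ↑A) ∧
  ∀ h : List (Finset X), ValidHist h → ∀ A : Finset X, A.Nonempty →
    ct h A ∈ consider ct Γ h A ∧
      ∀ z ∈ consider ct Γ h A, z ≠ ct h A → u z < u (ct h A)

/-- The set of ever-chosen alternatives. -/
def everChosen (ct : List (Finset X) → Finset X → X) : Set X :=
  {x | ∃ (h : List (Finset X)) (A : Finset X), ValidHist h ∧ A.Nonempty ∧ ct h A = x}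

/-- The history consisting of the first `n` choice sets of an infinite sequence. -/
def prefHist (seq : ℕ → Finset X) (n : ℕ) : List (Finset X) := (List.range n).map seq

/-- The choice made at stage `n` of the infinite sequence `seq`. -/
def choiceAt (ct : List (Finset X) → Finset X → X) (seq : ℕ → Finset X) (n : ℕ) : X :=
  ct (prefHist seq n) (seq n)

/-- The switch relation `x 𝕊 y`: in some sequence of nonempty choice sets, `y` is chosen at
some stage and `x` is chosen at a strictly later stage from a set containing `y`. -/
def Switch (ct : List (Finset X) → Finset X → X) (x y : X) : Prop :=
  x ≠ y ∧ ∃ seq : ℕ → Finset X, (∀ n, (seq n).Nonempty) ∧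
    ∃ i j : ℕ, i < j ∧ choiceAt ct seq i = y ∧ y ∈ seq j ∧ choiceAt ct seq j = x

/-- The within-sequence switch relation for the fixed sequence `seq`. -/
def SwitchIn (ct : List (Finset X) → Finset X → X) (seq : ℕ → Finset X) (x y : X) : Prop :=
  x ≠ y ∧ ∃ i j : ℕ, i < j ∧ choiceAt ct seq i = y ∧ y ∈ seq j ∧ choiceAt ct seq j = x

section Aux
variable {X : Type*}

lemma prefHist_length (seq : ℕ → Finset X) (n : ℕ) : (prefHist seq n).length = n := by
  simp [prefHist]

lemma validHist_prefHist {seq : ℕ → Finset X} (hs : ∀ n, (seq n).Nonempty) (n : ℕ) :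
    ValidHist (prefHist seq n) := by
  intro A hA
  simp only [prefHist, List.mem_map, List.mem_range] at hA
  obtain ⟨k, -, rfl⟩ := hA
  exact hs k

lemma choice_mem_chosen (ct : List (Finset X) → Finset X → X) (seq : ℕ → Finset X)
    {i j : ℕ} (hij : i < j) : choiceAt ct seq i ∈ chosenSet ct (prefHist seq j) := by
  refine ⟨⟨i, by simpa [prefHist_length] using hij⟩, ?_⟩
  have h1 : (prefHist seq j).take i = prefHist seq i := by
    simp [prefHist, ← List.map_take, List.take_range, Nat.min_eq_left hij.le]
  have h2 : (prefHist seq j).get ⟨i, by simpa [prefHist_length] using hij⟩ = seq i := by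
    simp [prefHist]
  rw [h1, h2]; rfl

end Aux
set_option linter.unusedSectionVars false
section Aux2
variable {X : Type*} [DecidableEq X] {ct : List (Finset X) → Finset X → X} {u : X → ℝ} {Γ : Finset X → Set X}

lemma consider_subset (hAAT : IsAAT ct u Γ) {A : Finset X} (hA : A.Nonempty)
    (h : List (Finset X)) : consider ct Γ h A ⊆ ↑A := by
  intro z hz
  rcases hz with hz | hz
  · exact (hAAT.1 A hA).2 hz
  · exact hz.2

lemma ct_singleton (hAAT : IsAAT ct u Γ) {h : List (Finset X)} (hv : ValidHist h) (x : X) :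
    ct h {x} = x := by
  have := (hAAT.2 h hv {x} ⟨x, Finset.mem_singleton_self x⟩).1
  have := consider_subset hAAT ⟨x, Finset.mem_singleton_self x⟩ h this
  simpa using this

lemma ct_pair (hAAT : IsAAT ct u Γ) {h : List (Finset X)} (hv : ValidHist h) {x y : X}
    (hx : x ∈ chosenSet ct h) (hu : u y < u x) : ct h {x, y} = x := by
  have hne : ({x, y} : Finset X).Nonempty := ⟨x, by simp⟩
  have hmem := (hAAT.2 h hv {x, y} hne).1
  have hsub := consider_subset hAAT hne h hmem
  have hxy : x ≠ y := fun e => absurd hu (by rw [e]; exact lt_irrefl _)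
  simp only [Finset.coe_insert, Finset.coe_singleton, Set.mem_insert_iff,
    Set.mem_singleton_iff] at hsub
  rcases hsub with h1 | h1
  · exact h1
  · exfalso
    have hxc : x ∈ consider ct Γ h {x, y} := Or.inr ⟨hx, by simp⟩
    have := (hAAT.2 h hv {x, y} hne).2 x hxc (by rw [h1]; exact hxy)
    rw [h1] at this
    exact absurd hu (not_lt.mpr this.le)

lemma switchIn_u (hAAT : IsAAT ct u Γ) {seq : ℕ → Finset X} (hs : ∀ n, (seq n).Nonempty)
    {x y : X} (h : SwitchIn ct seq x y) : u y < u x := by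
  obtain ⟨hne, i, j, hij, hi, hyj, hj⟩ := h
  have hychosen : y ∈ chosenSet ct (prefHist seq j) := hi ▸ choice_mem_chosen ct seq hij
  have hyc : y ∈ consider ct Γ (prefHist seq j) (seq j) := Or.inr ⟨hychosen, hyj⟩
  have hj' : ct (prefHist seq j) (seq j) = x := hj
  have := (hAAT.2 (prefHist seq j) (validHist_prefHist hs j) (seq j) (hs j)).2 y hyc
    (by rw [hj']; exact hne.symm)
  rwa [hj'] at this

lemma u_inj (hAAT : IsAAT ct u Γ) : Function.Injective u := by
  intro x y hxy
  by_contra hne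
  -- history [{x}, {y}]
  set h : List (Finset X) := [{x}, {y}] with hh
  have hv : ValidHist h := by
    intro A hA
    simp [hh] at hA
    rcases hA with rfl | rfl <;> exact ⟨_, Finset.mem_singleton_self _⟩
  have hv1 : ValidHist [({x} : Finset X)] := by
    intro A hA; simp at hA; subst hA; exact ⟨_, Finset.mem_singleton_self _⟩
  have hxc : x ∈ chosenSet ct h := by
    refine ⟨⟨0, by simp [hh]⟩, ?_⟩
    simpa [hh] using ct_singleton hAAT (fun A hA => by simp at hA) x
  have hyc : y ∈ chosenSet ct h := by
    refine ⟨⟨1, by simp [hh]⟩, ?_⟩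
    simpa [hh] using ct_singleton hAAT hv1 y
  have hne' : ({x, y} : Finset X).Nonempty := ⟨x, by simp⟩
  have hmem := (hAAT.2 h hv {x, y} hne').1
  have hsub := consider_subset hAAT hne' h hmem
  simp only [Finset.coe_insert, Finset.coe_singleton, Set.mem_insert_iff,
    Set.mem_singleton_iff] at hsub
  have hxcon : x ∈ consider ct Γ h {x, y} := Or.inr ⟨hxc, by simp⟩
  have hycon : y ∈ consider ct Γ h {x, y} := Or.inr ⟨hyc, by simp⟩
  rcases hsub with h1 | h1
  · have := (hAAT.2 h hv {x, y} hne').2 y hycon (by rw [h1]; exact fun e => hne e.symm)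
    rw [h1, hxy] at this; exact lt_irrefl _ this
  · have := (hAAT.2 h hv {x, y} hne').2 x hxcon (by rw [h1]; exact hne)
    rw [h1, hxy] at this; exact lt_irrefl _ this

end Aux2

/-- When `X` is finite, a single sequence of choice sets elicits all switches: its
within-sequence switch relation restricted to the ever-chosen alternatives is a strict
total order. -/
theorem stmt5 [Fintype X] [Nonempty X]
    (ct : List (Finset X) → Finset X → X) (u : X → ℝ) (Γ : Finset X → Set X)
    (hAAT : IsAAT ct u Γ) :
    ∃ seq : ℕ → Finset X, (∀ n, (seq n).Nonempty) ∧
      (∀ x ∈ everChosen ct, ∀ y ∈ everChosen ct,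
        SwitchIn ct seq x y → ¬ SwitchIn ct seq y x) ∧
      (∀ x ∈ everChosen ct, ∀ y ∈ everChosen ct, ∀ z ∈ everChosen ct,
        SwitchIn ct seq x y → SwitchIn ct seq y z → SwitchIn ct seq x z) ∧
      (∀ x ∈ everChosen ct, ∀ y ∈ everChosen ct, x ≠ y →
        SwitchIn ct seq x y ∨ SwitchIn ct seq y x) := by
  classical
  set m := Fintype.card X with hm
  have e : X ≃ Fin m := Fintype.equivFin X
  set c := Fintype.card (X × X) with hcdef
  have hc : 0 < c := Fintype.card_pos
  have g : (X × X) ≃ Fin c := Fintype.equivFin (X × X)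
  set seq : ℕ → Finset X := fun n =>
    if h : n < m then {e.symm ⟨n, h⟩}
    else {(g.symm ⟨(n - m) % c, Nat.mod_lt _ hc⟩).1,
          (g.symm ⟨(n - m) % c, Nat.mod_lt _ hc⟩).2} with hseq
  have hs : ∀ n, (seq n).Nonempty := by
    intro n
    by_cases h : n < m
    · simp [hseq, h]
    · simp [hseq, h]
  -- choice at singleton stages
  have hsing : ∀ x : X, choiceAt ct seq (e x) = x := by
    intro x
    have h1 : seq (e x) = {x} := by
      simp only [hseq]
      rw [dif_pos (e x).isLt]
      simp
    unfold choiceAt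
    rw [h1]
    exact ct_singleton hAAT (validHist_prefHist hs _) x
  -- the key: u y < u x implies SwitchIn x y
  have key : ∀ x y : X, u y < u x → SwitchIn ct seq x y := by
    intro x y hu
    have hne : x ≠ y := by rintro rfl; exact lt_irrefl _ hu
    set j := m + (g (x, y) : ℕ) with hj
    have hjm : ¬ j < m := by omega
    have hseqj : seq j = {x, y} := by
      simp only [hseq]
      rw [dif_neg hjm]
      have : (j - m) % c = (g (x, y) : ℕ) := by
        rw [hj]
        simp [Nat.mod_eq_of_lt (g (x, y)).isLt]
      simp [this]
    refine ⟨hne, (e y : ℕ), j, ?_, hsing y, ?_, ?_⟩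
    · exact lt_of_lt_of_le (e y).isLt (Nat.le_add_right m _)
    · rw [hseqj]; simp
    · have hxchosen : x ∈ chosenSet ct (prefHist seq j) := by
        have hlt : ((e x : ℕ)) < j := lt_of_lt_of_le (e x).isLt (Nat.le_add_right m _)
        have := choice_mem_chosen ct seq hlt
        rwa [hsing x] at this
      unfold choiceAt
      rw [hseqj]
      exact ct_pair hAAT (validHist_prefHist hs j) hxchosen hu
  have swu : ∀ {x y : X}, SwitchIn ct seq x y → u y < u x :=
    fun h => switchIn_u hAAT hs h
  refine ⟨seq, hs, ?_, ?_, ?_⟩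
  · intro x _ y _ hxy hyx
    exact lt_asymm (swu hxy) (swu hyx)
  · intro x _ y _ z _ hxy hyz
    exact key x z ((swu hyz).trans (swu hxy))
  · intro x _ y _ hne
    rcases lt_trichotomy (u x) (u y) with h | h | h
    · exact Or.inr (key y x h)
    · exact absurd (u_inj hAAT h) hne
    · exact Or.inl (key x y h)
end

section
/- Suppose c admits an AAT representation. Then c admits an AAT representation with attention function Γ if and only if for every choice set A: c₀(A) ∈ Γ(A) and Γ(A) ⊆ Γ⁺(A), where Γ⁺(A) := {x ∈ A : c₀(A) 𝕊 x, or x = c₀(A), or x ∉ X̂}. -/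
open Finset

variable {X : Type*}

/-- The maximal attention function `Γ⁺`. -/
def GammaPlus (ct : List (Finset X) → Finset X → X) (A : Finset X) : Set X :=
  {x | x ∈ A ∧ (Switch ct (ct [] A) x ∨ x = ct [] A ∨ x ∉ everChosen ct)}

lemma validHist_nil : ValidHist ([] : List (Finset X)) := by
  intro A hA; simp at hA

lemma chosenSet_nil (ct : List (Finset X) → Finset X → X) : chosenSet ct [] = ∅ := by
  ext x
  simp only [chosenSet, Set.mem_setOf_eq, Set.mem_empty_iff_false, iff_false]
  rintro ⟨i, -⟩
  exact i.elim0

lemma chosenSet_singleton (ct : List (Finset X) → Finset X → X) (B : Finset X) :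
    chosenSet ct [B] = {ct [] B} := by
  ext x
  simp only [chosenSet, Set.mem_setOf_eq, Set.mem_singleton_iff]
  constructor
  · rintro ⟨i, hi⟩
    have h0 : i = ⟨0, by simp⟩ := Fin.ext (Nat.lt_one_iff.mp (by simpa using i.2))
    rw [h0] at hi
    simpa using hi.symm
  · intro hx
    exact ⟨⟨0, by simp⟩, by simpa using hx.symm⟩

lemma choice_singleton {ct : List (Finset X) → Finset X → X} {u : X → ℝ}
    {Γ : Finset X → Set X} (hrep : IsAAT ct u Γ) {h : List (Finset X)}
    (hh : ValidHist h) (x : X) : ct h {x} = x := by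
  obtain ⟨hmem, -⟩ := hrep.2 h hh {x} (Finset.singleton_nonempty x)
  rcases hmem with h1 | h2
  · have := (hrep.1 {x} (Finset.singleton_nonempty x)).2 h1
    simpa using this
  · simpa using h2.2

lemma choice_after_singleton {ct : List (Finset X) → Finset X → X} {u : X → ℝ}
    {Γ : Finset X → Set X} (hrep : IsAAT ct u Γ) {A : Finset X} (hA : A.Nonempty)
    {x : X} (hxA : x ∈ A) (hxΓ : x ∈ Γ A) (hne : x ≠ ct [] A) :
    ct [{x}] A = ct [] A := by
  have hval : ValidHist [({x} : Finset X)] := by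
    intro B hB; simp at hB; subst hB; exact Finset.singleton_nonempty x
  have hspec0 := hrep.2 [] validHist_nil A hA
  have hc0 : ct [] A ∈ Γ A := by
    rcases hspec0.1 with h1 | h2
    · exact h1
    · rw [chosenSet_nil] at h2; simp at h2
  have hxlt : u x < u (ct [] A) := hspec0.2 x (Or.inl hxΓ) hne
  have hspec1 := hrep.2 [{x}] hval A hA
  set b := ct [{x}] A with hb
  have hbmem : b ∈ Γ A ∪ ({x} ∩ (↑A : Set X)) := by
    have := hspec1.1
    rwa [consider, chosenSet_singleton, choice_singleton hrep validHist_nil] at this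
  by_contra hbne
  have hc0lt : u (ct [] A) < u b := by
    apply hspec1.2
    · exact Or.inl hc0
    · exact fun hc => hbne hc.symm
  rcases hbmem with h1 | h2
  · have : u b < u (ct [] A) := hspec0.2 b (Or.inl h1) (fun hc => hbne hc)
    linarith
  · have hbx : b = x := h2.1
    rw [hbx] at hc0lt
    linarith

lemma switch_lt {ct : List (Finset X) → Finset X → X} {u : X → ℝ}
    {Γ : Finset X → Set X} (hrep : IsAAT ct u Γ) {a b : X}
    (hs : Switch ct a b) : u b < u a := by
  obtain ⟨hne, seq, hseq, i, j, hij, hib, hbj, hja⟩ := hs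
  have hvalid : ValidHist (prefHist seq j) := by
    intro B hB
    simp only [prefHist, List.mem_map, List.mem_range] at hB
    obtain ⟨n, -, rfl⟩ := hB
    exact hseq n
  have hlen : (prefHist seq j).length = j := by simp [prefHist]
  have hbmem : b ∈ chosenSet ct (prefHist seq j) := by
    refine ⟨⟨i, by omega⟩, ?_⟩
    have h1 : (prefHist seq j).take i = prefHist seq i := by
      simp [prefHist, ← List.map_take, List.take_range, Nat.min_eq_left hij.le]
    have h2 : (prefHist seq j).get ⟨i, by omega⟩ = seq i := by
      simp [prefHist, List.get_eq_getElem]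
    rw [h1, h2]
    exact hib
  have hspec := hrep.2 (prefHist seq j) hvalid (seq j) (hseq j)
  have hja' : ct (prefHist seq j) (seq j) = a := hja
  have : u b < u (ct (prefHist seq j) (seq j)) :=
    hspec.2 b (Or.inr ⟨hbmem, hbj⟩) (by rw [hja']; exact hne.symm)
  rwa [hja'] at this

lemma mem_everChosen {ct : List (Finset X) → Finset X → X} {u : X → ℝ}
    {Γ : Finset X → Set X} (hrep : IsAAT ct u Γ) (x : X) : x ∈ everChosen ct :=
  ⟨[], {x}, validHist_nil, Finset.singleton_nonempty x, choice_singleton hrep validHist_nil x⟩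

/-- Characterization of all attention functions representing `c`: `c` admits an AAT
representation with attention function `Γ` iff `c₀(A) ∈ Γ(A) ⊆ Γ⁺(A)` for all `A`. -/
theorem stmt8 (ct : List (Finset X) → Finset X → X)
    (h0 : ∃ (u0 : X → ℝ) (Γ0 : Finset X → Set X), IsAAT ct u0 Γ0)
    (Γ : Finset X → Set X) :
    (∃ u : X → ℝ, IsAAT ct u Γ) ↔
      ∀ A : Finset X, A.Nonempty → ct [] A ∈ Γ A ∧ Γ A ⊆ GammaPlus ct A := by
  obtain ⟨u0, Γ0, hrep0⟩ := h0
  constructor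
  · rintro ⟨u, hrep⟩ A hA
    have hspec0 := hrep.2 [] validHist_nil A hA
    have hc0 : ct [] A ∈ Γ A := by
      rcases hspec0.1 with h1 | h2
      · exact h1
      · rw [chosenSet_nil] at h2; simp at h2
    refine ⟨hc0, ?_⟩
    intro x hx
    have hxA : x ∈ A := (hrep.1 A hA).2 hx
    by_cases hxe : x = ct [] A
    · exact ⟨hxA, Or.inr (Or.inl hxe)⟩
    refine ⟨hxA, Or.inl ?_⟩
    refine ⟨Ne.symm hxe, fun n => if n = 0 then {x} else A, ?_, 0, 1, one_pos, ?_, ?_, ?_⟩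
    · intro n
      by_cases hn : n = 0 <;> simp [hn, hA, Finset.singleton_nonempty]
    · show ct (prefHist _ 0) _ = x
      simp only [prefHist, List.range_zero, List.map_nil, if_pos rfl]
      exact choice_singleton hrep validHist_nil x
    · simpa using hxA
    · show ct (prefHist _ 1) _ = ct [] A
      have h1 : prefHist (fun n => if n = 0 then ({x} : Finset X) else A) 1 = [{x}] := by
        rfl
      rw [h1]
      simp only [if_neg one_ne_zero]
      exact choice_after_singleton hrep hA hxA hx hxe
  · intro hchar
    refine ⟨u0, fun A hA => ⟨⟨ct [] A, (hchar A hA).1⟩,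
      fun x hx => Finset.mem_coe.mpr ((hchar A hA).2 hx).1⟩, ?_⟩
    intro h hh A hA
    have hspec := hrep0.2 h hh A hA
    have hspec0 := hrep0.2 [] validHist_nil A hA
    have hc0 : ct [] A ∈ Γ0 A := by
      rcases hspec0.1 with h1 | h2
      · exact h1
      · rw [chosenSet_nil] at h2; simp at h2
    set a := ct h A with ha
    have hac0 : a ≠ ct [] A → u0 (ct [] A) < u0 a := fun hne =>
      hspec.2 (ct [] A) (Or.inl hc0) (Ne.symm hne)
    have hle : u0 (ct [] A) ≤ u0 a := by
      by_cases hae : a = ct [] A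
      · rw [hae]
      · exact (hac0 hae).le
    constructor
    · rcases hspec.1 with h1 | h2
      · left
        have hae : a = ct [] A := by
          by_contra hae
          have h3 : u0 a < u0 (ct [] A) := hspec0.2 a (Or.inl h1) hae
          have h4 := hac0 hae
          linarith
        rw [hae]
        exact (hchar A hA).1
      · exact Or.inr h2
    · intro z hz hzne
      rcases hz with h1 | h2
      · obtain ⟨hzA, hd⟩ := (hchar A hA).2 h1
        rcases hd with hsw | heq | hnc
        · have := switch_lt hrep0 hsw
          linarith
        · rw [heq]
          apply hac0
          rw [← heq]
          exact Ne.symm hzne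
        · exact absurd (mem_everChosen hrep0 z) hnc
      · exact hspec.2 z (Or.inr h2) hzne
end
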